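/- arXiv:2006.05069 — 2 statements merged into one kernel-verified Lean document; each statement's English description precedes it below -/
import Mathlib

section
/- Let A be positive semidefinite, T an A-bounded operator with dw_A(T) = ‖T‖_A², and suppose there exists a unit A-vector x (i.e., ‖x‖_A = 1) with ‖Tx‖_A = ‖T‖_A. Then ⟨Tx,x⟩_A = 0. -/
/-!
If a unit vector `x` attains `‖T‖_A`, then `√(|⟨Tx,x⟩_A|² + ‖T‖_A⁴)` is one of the numbers whose
supremum is `dw_A(T) = ‖T‖_A²`, which forces `⟨Tx,x⟩_A = 0`. These numbers are bounded (so the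
supremum is not Lean's junk value `0`) by the Cauchy–Schwarz inequality for the semi-inner product
`⟨·,·⟩_A` together with the `A`-boundedness of `T`.
-/

noncomputable section

namespace DW

variable {H : Type*} [NormedAddCommGroup H] [InnerProductSpace ℂ H]

/-- The semi-inner product induced by `A`: `⟨x,y⟩_A = ⟨Ax, y⟩`. -/
def innA (A : H →L[ℂ] H) (x y : H) : ℂ := inner ℂ (A x) y

/-- The seminorm induced by `A`. -/
def normA (A : H →L[ℂ] H) (x : H) : ℝ := Real.sqrt (innA A x x).re

/-- `T` is `A`-bounded. -/
def IsABounded (A T : H →L[ℂ] H) : Prop := ∃ c > 0, ∀ x, normA A (T x) ≤ c * normA A x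

/-- `S` is an `A`-adjoint of `T`. -/
def IsAAdjointPair (A T S : H →L[ℂ] H) : Prop := ∀ x y, innA A (T x) y = innA A x (S y)

/-- The `A`-operator seminorm. -/
def opNormA (A T : H →L[ℂ] H) : ℝ := sSup {r | ∃ x, normA A x = 1 ∧ r = normA A (T x)}

/-- The `A`-minimum modulus. -/
def mA (A T : H →L[ℂ] H) : ℝ := sInf {r | ∃ x, normA A x = 1 ∧ r = normA A (T x)}

/-- The `A`-numerical radius. -/
def wA (A T : H →L[ℂ] H) : ℝ :=
  sSup {r | ∃ x, normA A x = 1 ∧ r = ‖innA A (T x) x‖}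

/-- The `A`-Crawford number. -/
def cA (A T : H →L[ℂ] H) : ℝ :=
  sInf {r | ∃ x, normA A x = 1 ∧ r = ‖innA A (T x) x‖}

/-- The `A`-Davis-Wielandt radius. -/
def dwA (A T : H →L[ℂ] H) : ℝ :=
  sSup {r | ∃ x, normA A x = 1 ∧
    r = Real.sqrt (‖innA A (T x) x‖ ^ 2 + normA A (T x) ^ 4)}

/-- The semi-inner product on `H ⊕ H` induced by `𝔸 = diag(A,A)`. -/
def innA2 (A : H →L[ℂ] H) (z w : H × H) : ℂ := innA A z.1 w.1 + innA A z.2 w.2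

/-- The seminorm on `H ⊕ H` induced by `𝔸 = diag(A,A)`. -/
def normA2 (A : H →L[ℂ] H) (z : H × H) : ℝ := Real.sqrt (innA2 A z z).re

/-- The `𝔸`-numerical radius on `H ⊕ H`, `𝔸 = diag(A,A)`. -/
def wA2 (A : H →L[ℂ] H) (T : H × H →L[ℂ] H × H) : ℝ :=
  sSup {r | ∃ z, normA2 A z = 1 ∧ r = ‖innA2 A (T z) z‖}

/-- The `𝔸`-Davis-Wielandt radius on `H ⊕ H`, `𝔸 = diag(A,A)`. -/
def dwA2 (A : H →L[ℂ] H) (T : H × H →L[ℂ] H × H) : ℝ :=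
  sSup {r | ∃ z, normA2 A z = 1 ∧
    r = Real.sqrt (‖innA2 A (T z) z‖ ^ 2 + normA2 A (T z) ^ 4)}

/-- The block operator `[[0, X], [Y, 0]]` on `H ⊕ H`. -/
def offDiag (X Y : H →L[ℂ] H) : H × H →L[ℂ] H × H :=
  (X.comp (ContinuousLinearMap.snd ℂ H H)).prod (Y.comp (ContinuousLinearMap.fst ℂ H H))

end DW

namespace DW

variable {H : Type*} [NormedAddCommGroup H] [InnerProductSpace ℂ H]

/-- `⟨·,·⟩_A` as a pre-inner-product structure, to reuse Mathlib's Cauchy–Schwarz for it. -/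
abbrev innACore (A : H →L[ℂ] H) (hA : A.IsPositive) : PreInnerProductSpace.Core ℂ H where
  inner u v := innA A u v
  conj_inner_symm u v := by
    simp only [innA, inner_conj_symm]
    exact (hA.isSymmetric u v).symm
  re_inner_nonneg u := hA.re_inner_nonneg_left u
  add_left u v w := by simp only [innA, map_add, inner_add_left]
  smul_left u v r := by simp only [innA, map_smul, inner_smul_left]

theorem norm_innA_le (A : H →L[ℂ] H) (hA : A.IsPositive) (u v : H) :
    ‖innA A u v‖ ≤ normA A u * normA A v :=
  InnerProductSpace.Core.norm_inner_le_norm (c := innACore A hA) u v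

theorem bddAbove_dwA_set (A T : H →L[ℂ] H) (hA : A.IsPositive) (hT : IsABounded A T) :
    BddAbove {r | ∃ x, normA A x = 1 ∧
      r = Real.sqrt (‖innA A (T x) x‖ ^ 2 + normA A (T x) ^ 4)} := by
  obtain ⟨c, -, hc⟩ := hT
  refine ⟨Real.sqrt (c ^ 2 + c ^ 4), ?_⟩
  rintro r ⟨x, hx, rfl⟩
  have hTx : normA A (T x) ≤ c := by simpa only [hx, mul_one] using hc x
  have hinn : ‖innA A (T x) x‖ ≤ c :=
    (norm_innA_le A hA (T x) x).trans (by rw [hx, mul_one]; exact hTx)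
  gcongr
  exact Real.sqrt_nonneg _

theorem sqrt_le_dwA (A T : H →L[ℂ] H) (hA : A.IsPositive) (hT : IsABounded A T)
    {x : H} (hx : normA A x = 1) :
    Real.sqrt (‖innA A (T x) x‖ ^ 2 + normA A (T x) ^ 4) ≤ dwA A T :=
  le_csSup (bddAbove_dwA_set A T hA hT) ⟨x, hx, rfl⟩

end DW

open DW

variable {H : Type*} [NormedAddCommGroup H] [InnerProductSpace ℂ H] [CompleteSpace H]

theorem stmt2 (A T : H →L[ℂ] H) (hA : A.IsPositive) (hT : IsABounded A T)
    (hdw : dwA A T = opNormA A T ^ 2)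
    (x : H) (hx : normA A x = 1) (hTx : normA A (T x) = opNormA A T) :
    innA A (T x) x = 0 := by
  have hle := sqrt_le_dwA A T hA hT hx
  rw [hdw, hTx, Real.sqrt_le_left (by positivity)] at hle
  have hsq : ‖innA A (T x) x‖ ^ 2 = 0 := le_antisymm (by linarith) (sq_nonneg _)
  exact norm_eq_zero.mp (pow_eq_zero_iff two_ne_zero |>.mp hsq)
end
end

section
/- Let A be positive semidefinite and T an operator admitting an A-adjoint T^♯. Then (1/2)[w_A(T + T^♯T)² + c_A(T − T^♯T)²] ≤ dw_A(T)² ≤ (1/2)[w_A(T + T^♯T)² + w_A(T − T^♯T)²]. -/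
noncomputable section

/-! `⟨T^♯T x, x⟩_A = ‖T x‖_A²` is real, so the parallelogram law in `ℂ` gives, for every `x`,
`|⟨(T + T^♯T) x, x⟩_A|² + |⟨(T - T^♯T) x, x⟩_A|² = 2 (|⟨T x, x⟩_A|² + ‖T x‖_A⁴)`.
Taking suprema over the `A`-unit sphere (and, for the lower bound, the infimum of the second
term) gives both inequalities. The suprema must be shown finite, since `sSup` of an unbounded set
of reals is `0`: an operator with an `A`-adjoint is `A`-bounded, because for the `A`-selfadjoint
`R = T^♯T` the powers `R ^ 2 ^ n` control `‖R x‖_A` on the `A`-unit sphere. -/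

lemma sq_sSup_le {s : Set ℝ} {a : ℝ} (hs : ∀ r ∈ s, 0 ≤ r) (hsa : ∀ r ∈ s, r ^ 2 ≤ a)
    (ha : 0 ≤ a) : sSup s ^ 2 ≤ a := by
  have hle : sSup s ≤ √a :=
    Real.sSup_le (fun r hr => (Real.le_sqrt (hs r hr) ha).mpr (hsa r hr)) (Real.sqrt_nonneg a)
  calc sSup s ^ 2 ≤ √a ^ 2 := pow_le_pow_left₀ (Real.sSup_nonneg hs) hle 2
    _ = a := Real.sq_sqrt ha

section SqAddSq

variable {α : Type*} {P : α → Prop} {f g h : α → ℝ}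

lemma bddAbove_of_sq_le_two_mul_sq (hh : ∀ x, 0 ≤ h x) (hfh : ∀ x, P x → f x ^ 2 ≤ 2 * h x ^ 2)
    (hbdd : BddAbove {r | ∃ x, P x ∧ r = h x}) : BddAbove {r | ∃ x, P x ∧ r = f x} := by
  obtain ⟨M, hM⟩ := hbdd
  refine ⟨2 * M, ?_⟩
  rintro r ⟨x, hx, rfl⟩
  have hhM : h x ≤ M := hM ⟨x, hx, rfl⟩
  have hhx := hh x
  exact abs_le_of_sq_le_sq' (by nlinarith [hfh x hx]) (by linarith) |>.2

variable (hf : ∀ x, 0 ≤ f x) (hg : ∀ x, 0 ≤ g x) (hh : ∀ x, 0 ≤ h x)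
  (hfgh : ∀ x, P x → f x ^ 2 + g x ^ 2 = 2 * h x ^ 2)
  (hbdd : BddAbove {r | ∃ x, P x ∧ r = h x})
include hf hg hh hfgh hbdd

lemma sq_sSup_le_half_add_sq_sSup :
    sSup {r | ∃ x, P x ∧ r = h x} ^ 2 ≤
      1 / 2 * (sSup {r | ∃ x, P x ∧ r = f x} ^ 2 + sSup {r | ∃ x, P x ∧ r = g x} ^ 2) := by
  have hfB := bddAbove_of_sq_le_two_mul_sq (f := f) hh
    (fun x hx => by nlinarith [hfgh x hx, sq_nonneg (g x)]) hbdd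
  have hgB := bddAbove_of_sq_le_two_mul_sq (f := g) hh
    (fun x hx => by nlinarith [hfgh x hx, sq_nonneg (f x)]) hbdd
  refine sq_sSup_le (by rintro r ⟨x, -, rfl⟩; exact hh x) ?_ (by positivity)
  rintro r ⟨x, hx, rfl⟩
  have hfx : f x ^ 2 ≤ sSup {r | ∃ x, P x ∧ r = f x} ^ 2 :=
    pow_le_pow_left₀ (hf x) (le_csSup hfB ⟨x, hx, rfl⟩) 2
  have hgx : g x ^ 2 ≤ sSup {r | ∃ x, P x ∧ r = g x} ^ 2 :=
    pow_le_pow_left₀ (hg x) (le_csSup hgB ⟨x, hx, rfl⟩) 2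
  linarith [hfgh x hx]

lemma half_add_sq_sInf_le_sq_sSup :
    1 / 2 * (sSup {r | ∃ x, P x ∧ r = f x} ^ 2 + sInf {r | ∃ x, P x ∧ r = g x} ^ 2) ≤
      sSup {r | ∃ x, P x ∧ r = h x} ^ 2 := by
  by_cases hP : ∃ x, P x
  swap
  · have hempty : ∀ k : α → ℝ, {r | ∃ x, P x ∧ r = k x} = ∅ :=
      fun k => Set.eq_empty_of_forall_notMem fun r ⟨x, hx, _⟩ => hP ⟨x, hx⟩
    simp only [hempty, Real.sSup_empty, Real.sInf_empty]
    norm_num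
  set D := sSup {r | ∃ x, P x ∧ r = h x}
  set c := sInf {r | ∃ x, P x ∧ r = g x}
  have hgB : BddBelow {r | ∃ x, P x ∧ r = g x} := ⟨0, by rintro r ⟨x, -, rfl⟩; exact hg x⟩
  have hc : 0 ≤ c := Real.sInf_nonneg (by rintro r ⟨x, -, rfl⟩; exact hg x)
  have hfx : ∀ x, P x → f x ^ 2 ≤ 2 * D ^ 2 - c ^ 2 := by
    intro x hx
    have hcg : c ^ 2 ≤ g x ^ 2 := pow_le_pow_left₀ hc (csInf_le hgB ⟨x, hx, rfl⟩) 2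
    have hhD : h x ^ 2 ≤ D ^ 2 := pow_le_pow_left₀ (hh x) (le_csSup hbdd ⟨x, hx, rfl⟩) 2
    linarith [hfgh x hx]
  obtain ⟨x₀, hx₀⟩ := hP
  have hfD := sq_sSup_le (s := {r | ∃ x, P x ∧ r = f x}) (by rintro r ⟨x, -, rfl⟩; exact hf x)
    (by rintro r ⟨x, hx, rfl⟩; exact hfx x hx) ((sq_nonneg _).trans (hfx x₀ hx₀))
  linarith

end SqAddSq

lemma le_of_forall_pow_two_pow_le_mul {a b C : ℝ} (hb : 0 ≤ b)
    (h : ∀ n : ℕ, a ^ 2 ^ n ≤ C * b ^ 2 ^ n) : a ≤ b := by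
  by_contra! hba
  rcases hb.eq_or_lt with rfl | hb
  · have h0 := h 0
    simp only [pow_zero, pow_one, mul_zero] at h0
    linarith
  have hab : 1 < a / b := (one_lt_div hb).mpr hba
  obtain ⟨n, hn⟩ := pow_unbounded_of_one_lt C hab
  have hle : (a / b) ^ 2 ^ n ≤ C := by
    rw [div_pow, div_le_iff₀ (pow_pos hb _)]
    exact h n
  linarith [pow_le_pow_right₀ hab.le (Nat.lt_two_pow_self (n := n)).le]

namespace DW

variable {H : Type*} [NormedAddCommGroup H] [InnerProductSpace ℂ H] {A S S' T T' R : H →L[ℂ] H}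

lemma IsAAdjointPair.comp (hS : IsAAdjointPair A S S') (hT : IsAAdjointPair A T T') :
    IsAAdjointPair A (S.comp T) (T'.comp S') :=
  fun x y => (hS (T x) y).trans (hT x (S' y))

lemma IsAAdjointPair.pow (hR : IsAAdjointPair A R R) (n : ℕ) :
    IsAAdjointPair A (R ^ n) (R ^ n) := by
  induction n with
  | zero => exact fun x y => rfl
  | succ n ih =>
    have h := ih.comp hR
    rwa [← ContinuousLinearMap.mul_def, ← ContinuousLinearMap.mul_def, ← pow_succ, ← pow_succ']
      at h

lemma innA_conj_symm (hA : (A : H →ₗ[ℂ] H).IsSymmetric) (x y : H) :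
    starRingEnd ℂ (innA A x y) = innA A y x := by
  rw [innA, innA, inner_conj_symm, ← ContinuousLinearMap.coe_coe, hA]

lemma IsAAdjointPair.symm (hA : (A : H →ₗ[ℂ] H).IsSymmetric) (hT : IsAAdjointPair A T T') :
    IsAAdjointPair A T' T := fun x y => by
  rw [← innA_conj_symm hA, ← hT, innA_conj_symm hA]

section Positive

variable [CompleteSpace H] (hA : A.IsPositive)
include hA

lemma innA_eq_inner_sqrt (x y : H) : innA A x y = inner ℂ (CFC.sqrt A x) (CFC.sqrt A y) := by
  have hsqrt : CFC.sqrt A * CFC.sqrt A = A :=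
    CFC.sqrt_mul_sqrt_self A ((ContinuousLinearMap.nonneg_iff_isPositive A).mpr hA)
  have hsymm := ContinuousLinearMap.isSelfAdjoint_iff_isSymmetric.mp
    ((ContinuousLinearMap.nonneg_iff_isPositive _).mp (CFC.sqrt_nonneg A)).isSelfAdjoint
  rw [innA]
  nth_rewrite 1 [← hsqrt]
  exact hsymm _ _

lemma normA_eq_norm_sqrt (x : H) : normA A x = ‖CFC.sqrt A x‖ := by
  rw [normA, innA_eq_inner_sqrt hA, ← RCLike.re_to_complex, inner_self_eq_norm_sq,
    Real.sqrt_sq (norm_nonneg _)]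

lemma innA_self (x : H) : innA A x x = ((normA A x ^ 2 : ℝ) : ℂ) := by
  rw [innA_eq_inner_sqrt hA, normA_eq_norm_sqrt hA, inner_self_eq_norm_sq_to_K]
  norm_cast

lemma norm_innA_le_s7 (x y : H) : ‖innA A x y‖ ≤ normA A x * normA A y := by
  rw [innA_eq_inner_sqrt hA, normA_eq_norm_sqrt hA, normA_eq_norm_sqrt hA]
  exact norm_inner_le_norm _ _

lemma normA_le (x : H) : normA A x ≤ ‖CFC.sqrt A‖ * ‖x‖ := by
  rw [normA_eq_norm_sqrt hA]
  exact (CFC.sqrt A).le_opNorm x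

lemma IsAAdjointPair.normA_apply_sq_le (hT : IsAAdjointPair A T T') (x : H) :
    normA A (T x) ^ 2 ≤ normA A x * normA A (T' (T x)) := by
  have h := congrArg Complex.re (hT x (T x))
  rw [innA_self hA, Complex.ofReal_re] at h
  exact h.trans_le ((Complex.re_le_norm _).trans (norm_innA_le_s7 hA _ _))

/-- Iterating `‖S x‖_A² ≤ ‖S² x‖_A` along `S = R ^ 2 ^ k` gives
`‖R x‖_A ^ 2 ^ n ≤ ‖R ^ 2 ^ n x‖_A ≤ ‖√A‖ ‖x‖ ‖R‖ ^ 2 ^ n` for every `n`. -/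
lemma IsAAdjointPair.normA_apply_le (hR : IsAAdjointPair A R R) {x : H} (hx : normA A x = 1) :
    normA A (R x) ≤ ‖R‖ := by
  have hiter : ∀ n : ℕ, normA A (R x) ^ 2 ^ n ≤ normA A ((R ^ 2 ^ n) x) := by
    intro n
    induction n with
    | zero => simp
    | succ n ih =>
      calc normA A (R x) ^ 2 ^ (n + 1) = (normA A (R x) ^ 2 ^ n) ^ 2 := by rw [pow_succ, pow_mul]
        _ ≤ normA A ((R ^ 2 ^ n) x) ^ 2 :=
          pow_le_pow_left₀ (pow_nonneg (Real.sqrt_nonneg _) _) ih 2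
        _ ≤ normA A x * normA A ((R ^ 2 ^ n) ((R ^ 2 ^ n) x)) :=
          (hR.pow (2 ^ n)).normA_apply_sq_le hA x
        _ = normA A ((R ^ 2 ^ (n + 1)) x) := by
          rw [hx, one_mul, ← mul_apply_eq_comp, ← pow_add, ← two_mul, ← pow_succ']
  refine le_of_forall_pow_two_pow_le_mul (norm_nonneg R) (C := ‖CFC.sqrt A‖ * ‖x‖) fun n => ?_
  calc normA A (R x) ^ 2 ^ n ≤ normA A ((R ^ 2 ^ n) x) := hiter n
    _ ≤ ‖CFC.sqrt A‖ * (‖R ^ 2 ^ n‖ * ‖x‖) := by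
      grw [normA_le hA, (R ^ 2 ^ n).le_opNorm x]
    _ ≤ ‖CFC.sqrt A‖ * (‖R‖ ^ 2 ^ n * ‖x‖) := by
      grw [norm_pow_le' R (Nat.pow_pos two_pos)]
    _ = ‖CFC.sqrt A‖ * ‖x‖ * ‖R‖ ^ 2 ^ n := by ring

lemma IsAAdjointPair.normA_apply_sq_le_norm_comp (hT : IsAAdjointPair A T T') {x : H}
    (hx : normA A x = 1) : normA A (T x) ^ 2 ≤ ‖T'.comp T‖ := by
  have hR : IsAAdjointPair A (T'.comp T) (T'.comp T) := (hT.symm hA.isSymmetric).comp hT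
  calc normA A (T x) ^ 2 ≤ normA A x * normA A (T' (T x)) := hT.normA_apply_sq_le hA x
    _ = normA A ((T'.comp T) x) := by rw [hx, one_mul, ContinuousLinearMap.comp_apply]
    _ ≤ ‖T'.comp T‖ := hR.normA_apply_le hA hx

lemma IsAAdjointPair.bddAbove_davisWielandt (hT : IsAAdjointPair A T T') :
    BddAbove {r | ∃ x, normA A x = 1 ∧
      r = Real.sqrt (‖innA A (T x) x‖ ^ 2 + normA A (T x) ^ 4)} := by
  set K := ‖T'.comp T‖
  refine ⟨Real.sqrt (K + K ^ 2), ?_⟩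
  rintro r ⟨x, hx, rfl⟩
  have hTx : normA A (T x) ^ 2 ≤ K := hT.normA_apply_sq_le_norm_comp hA hx
  have hinn : ‖innA A (T x) x‖ ≤ normA A (T x) := by
    simpa [hx] using norm_innA_le_s7 hA (T x) x
  have hinn_sq : ‖innA A (T x) x‖ ^ 2 ≤ normA A (T x) ^ 2 :=
    pow_le_pow_left₀ (norm_nonneg _) hinn 2
  have hTx4 : normA A (T x) ^ 4 ≤ K ^ 2 := by
    rw [show normA A (T x) ^ 4 = (normA A (T x) ^ 2) ^ 2 by ring]
    exact pow_le_pow_left₀ (sq_nonneg _) hTx 2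
  exact Real.sqrt_le_sqrt (by linarith)

lemma IsAAdjointPair.norm_innA_add_sq_add_norm_innA_sub_sq (hT : IsAAdjointPair A T T') (x : H) :
    ‖innA A ((T + T'.comp T) x) x‖ ^ 2 + ‖innA A ((T - T'.comp T) x) x‖ ^ 2 =
      2 * (‖innA A (T x) x‖ ^ 2 + normA A (T x) ^ 4) := by
  have hR : innA A (T' (T x)) x = ((normA A (T x) ^ 2 : ℝ) : ℂ) := by
    rw [hT.symm hA.isSymmetric, innA_self hA]
  have hadd : innA A ((T + T'.comp T) x) x = innA A (T x) x + (normA A (T x) ^ 2 : ℝ) := by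
    rw [← hR]
    simp only [innA, add_apply, ContinuousLinearMap.comp_apply, map_add, inner_add_left]
  have hsub : innA A ((T - T'.comp T) x) x = innA A (T x) x - (normA A (T x) ^ 2 : ℝ) := by
    rw [← hR]
    simp only [innA, sub_apply, ContinuousLinearMap.comp_apply, map_sub, inner_sub_left]
  rw [hadd, hsub, parallelogram_law_with_norm ℂ, Complex.norm_real, Real.norm_eq_abs, sq_abs]
  ring

end Positive

end DW

open DW

variable {H : Type*} [NormedAddCommGroup H] [InnerProductSpace ℂ H] [CompleteSpace H]

theorem stmt7 (A T T' : H →L[ℂ] H) (hA : A.IsPositive) (hT' : IsAAdjointPair A T T') :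
    (1 / 2) * (wA A (T + T'.comp T) ^ 2 + cA A (T - T'.comp T) ^ 2) ≤ dwA A T ^ 2 ∧
      dwA A T ^ 2 ≤ (1 / 2) * (wA A (T + T'.comp T) ^ 2 + wA A (T - T'.comp T) ^ 2) := by
  have hsq : ∀ x, ‖innA A ((T + T'.comp T) x) x‖ ^ 2 + ‖innA A ((T - T'.comp T) x) x‖ ^ 2 =
      2 * Real.sqrt (‖innA A (T x) x‖ ^ 2 + normA A (T x) ^ 4) ^ 2 := fun x => by
    rw [Real.sq_sqrt (by positivity), hT'.norm_innA_add_sq_add_norm_innA_sub_sq hA x]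
  have hbdd := hT'.bddAbove_davisWielandt hA
  exact ⟨half_add_sq_sInf_le_sq_sSup (fun _ => norm_nonneg _) (fun _ => norm_nonneg _)
      (fun _ => Real.sqrt_nonneg _) (fun x _ => hsq x) hbdd,
    sq_sSup_le_half_add_sq_sSup (fun _ => norm_nonneg _) (fun _ => norm_nonneg _)
      (fun _ => Real.sqrt_nonneg _) (fun x _ => hsq x) hbdd⟩
end
end
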